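/- arXiv:1701.05583 — 4 statements merged into one kernel-verified Lean document; each statement's English description precedes it below -/
import Mathlib

section
/- With the setup of the previous definitions, the Bhattacharyya parameter of the check convolution satisfies B(W ⊠ W') ≤ B(W) + B(W'). -/
lemma sqrt_add_le_aux (x y : ℝ) (hx : 0 ≤ x) (hy : 0 ≤ y) :
    Real.sqrt (x + y) ≤ Real.sqrt x + Real.sqrt y := by
  have h := Real.sqrt_le_sqrt (show x + y ≤ (Real.sqrt x + Real.sqrt y)^2 by
    nlinarith [Real.sq_sqrt hx, Real.sq_sqrt hy, Real.sqrt_nonneg x, Real.sqrt_nonneg y,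
      mul_nonneg (Real.sqrt_nonneg x) (Real.sqrt_nonneg y)])
  rwa [Real.sqrt_sq (by positivity)] at h

lemma key_pt (a b c d : ℝ) (ha : 0 ≤ a) (hb : 0 ≤ b) (hc : 0 ≤ c) (hd : 0 ≤ d) :
    Real.sqrt ((1/2*a*c + 1/2*b*d) * (1/2*b*c + 1/2*a*d)) ≤
      1/2 * (Real.sqrt (a*b) * (c+d) + Real.sqrt (c*d) * (a+b)) := by
  have h1 : (1/2*a*c + 1/2*b*d) * (1/2*b*c + 1/2*a*d)
      = 1/4 * (a*b*(c^2+d^2) + c*d*(a^2+b^2)) := by ring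
  rw [h1]
  have h2 : Real.sqrt (1/4 * (a*b*(c^2+d^2) + c*d*(a^2+b^2)))
      = 1/2 * Real.sqrt (a*b*(c^2+d^2) + c*d*(a^2+b^2)) := by
    rw [show (1:ℝ)/4 = (1/2)^2 by norm_num, Real.sqrt_mul (by positivity),
      Real.sqrt_sq (by norm_num)]
  rw [h2]
  have h3 : Real.sqrt (a*b*(c^2+d^2) + c*d*(a^2+b^2))
      ≤ Real.sqrt (a*b*(c^2+d^2)) + Real.sqrt (c*d*(a^2+b^2)) :=
    sqrt_add_le_aux _ _ (by positivity) (by positivity)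
  have h4 : Real.sqrt (a*b*(c^2+d^2)) ≤ Real.sqrt (a*b) * (c+d) := by
    have : a*b*(c^2+d^2) ≤ a*b*(c+d)^2 := by nlinarith [mul_nonneg ha hb, mul_nonneg hc hd]
    calc Real.sqrt (a*b*(c^2+d^2)) ≤ Real.sqrt (a*b*(c+d)^2) := Real.sqrt_le_sqrt this
      _ = Real.sqrt (a*b) * (c+d) := by
          rw [Real.sqrt_mul (mul_nonneg ha hb), Real.sqrt_sq (by positivity)]
  have h5 : Real.sqrt (c*d*(a^2+b^2)) ≤ Real.sqrt (c*d) * (a+b) := by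
    have : c*d*(a^2+b^2) ≤ c*d*(a+b)^2 := by nlinarith [mul_nonneg hc hd, mul_nonneg ha hb]
    calc Real.sqrt (c*d*(a^2+b^2)) ≤ Real.sqrt (c*d*(a+b)^2) := Real.sqrt_le_sqrt this
      _ = Real.sqrt (c*d) * (a+b) := by
          rw [Real.sqrt_mul (mul_nonneg hc hd), Real.sqrt_sq (by positivity)]
  nlinarith [h3, h4, h5]

/-- The Bhattacharyya parameter of the check convolution satisfies
`B(W ⊠ W') ≤ B(W) + B(W')`. -/
theorem stmt_11 (Ω Ω' : Type) [Fintype Ω] [Fintype Ω']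
    (W : Bool → Ω → ℝ) (W' : Bool → Ω' → ℝ)
    (hW : ∀ z ω, 0 ≤ W z ω) (hW' : ∀ z ω', 0 ≤ W' z ω')
    (hWsum : ∀ z, ∑ ω : Ω, W z ω = 1) (hW'sum : ∀ z, ∑ ω' : Ω', W' z ω' = 1) :
    ∑ p : Ω × Ω',
        Real.sqrt
          ((1/2 * W false p.1 * W' false p.2 + 1/2 * W true p.1 * W' true p.2) *
           (1/2 * W true p.1 * W' false p.2 + 1/2 * W false p.1 * W' true p.2)) ≤
      (∑ ω : Ω, Real.sqrt (W false ω * W true ω)) +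
        (∑ ω' : Ω', Real.sqrt (W' false ω' * W' true ω')) := by
  have step1 : ∑ p : Ω × Ω',
        Real.sqrt
          ((1/2 * W false p.1 * W' false p.2 + 1/2 * W true p.1 * W' true p.2) *
           (1/2 * W true p.1 * W' false p.2 + 1/2 * W false p.1 * W' true p.2)) ≤
      ∑ p : Ω × Ω', (1/2 * (Real.sqrt (W false p.1 * W true p.1) * (W' false p.2 + W' true p.2)
          + Real.sqrt (W' false p.2 * W' true p.2) * (W false p.1 + W true p.1))) := by
    apply Finset.sum_le_sum
    intro p _
    exact key_pt _ _ _ _ (hW _ _) (hW _ _) (hW' _ _) (hW' _ _)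
  refine step1.trans ?_
  have e1 : ∑ ω' : Ω', (W' false ω' + W' true ω') = 2 := by
    rw [Finset.sum_add_distrib, hW'sum, hW'sum]; norm_num
  have e2 : ∑ ω : Ω, (W false ω + W true ω) = 2 := by
    rw [Finset.sum_add_distrib, hWsum, hWsum]; norm_num
  have expand : ∑ p : Ω × Ω', (1/2 * (Real.sqrt (W false p.1 * W true p.1) * (W' false p.2 + W' true p.2)
          + Real.sqrt (W' false p.2 * W' true p.2) * (W false p.1 + W true p.1)))
      = 1/2 * ((∑ ω : Ω, Real.sqrt (W false ω * W true ω)) * (∑ ω' : Ω', (W' false ω' + W' true ω'))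
          + (∑ ω' : Ω', Real.sqrt (W' false ω' * W' true ω')) * (∑ ω : Ω, (W false ω + W true ω))) := by
    rw [Fintype.sum_prod_type]
    have inner : ∀ x : Ω, ∑ y : Ω',
        1/2 * (Real.sqrt (W false x * W true x) * (W' false y + W' true y)
          + Real.sqrt (W' false y * W' true y) * (W false x + W true x))
        = 1/2 * (Real.sqrt (W false x * W true x) * (∑ ω' : Ω', (W' false ω' + W' true ω'))
          + (∑ ω' : Ω', Real.sqrt (W' false ω' * W' true ω')) * (W false x + W true x)) := by
      intro x
      rw [← Finset.mul_sum, Finset.sum_add_distrib, ← Finset.mul_sum, ← Finset.sum_mul]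
    simp_rw [inner]
    rw [← Finset.mul_sum, Finset.sum_add_distrib, ← Finset.sum_mul, ← Finset.mul_sum]
  rw [expand, e1, e2]
  ring_nf
  linarith
end

section
/- For the binary symmetric channel BSC(p) with uniform input, let I(W) = 1 − H(Z|W(Z)) = 1 − h(p) be its symmetric capacity, and let W^⊥ be its dual, a channel with pure qubit outputs √p|0⟩ + (−1)^x√(1−p)|1⟩ whose symmetric capacity is I(W^⊥) = h((1−√(1−(1−2p)²))/2) computed as 1 − H(X|W^⊥(X)). Then I(W) + I(W^⊥) = 1; equivalently, H(Z|W(Z)) + H(X|W^⊥(X)) = 1, where H(X|W^⊥(X)) is the von Neumann conditional entropy of the uniform input X given the quantum output. -/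
/-- Von Neumann entropy (base 2) of a Hermitian matrix, via its eigenvalues. -/
noncomputable def vnEntropy {n : Type*} [Fintype n] [DecidableEq n]
    {ρ : Matrix n n ℂ} (h : ρ.IsHermitian) : ℝ :=
  ∑ i, -(h.eigenvalues i * Real.logb 2 (h.eigenvalues i))

/-!
The uniform input makes both posteriors of `BSC(p)` equal to `(p, 1 - p)`, so `H(Z|W(Z)) = h(p)`.
On the quantum side the outputs `σₓ = |ψₓ⟩⟨ψₓ|` are rank-one projections, so
`ρ_XB = ½ ∑ₓ |x⟩⟨x| ⊗ σₓ` satisfies `ρ_XB² = ½ ρ_XB`: its spectrum lies in `{0, ½}` and,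
having trace one, it has entropy exactly `1`. The cross terms `±√(p(1-p))` cancel in
`ρ_B = ½ (σ₀ + σ₁) = diag(p, 1 - p)`, whence `S(ρ_B) = h(p)` and `H(X|W^⊥(X)) = 1 - h(p)`.
-/

open Matrix Real

namespace Matrix

section CQState

variable {ι n R : Type*} [DecidableEq ι]

/-- The classical-quantum state `∑ₓ |x⟩⟨x| ⊗ M x`, with the classical index first. -/
def cqState [Zero R] (M : ι → Matrix n n R) : Matrix (ι × n) (ι × n) R :=
  (blockDiagonal M).submatrix Prod.swap Prod.swap

theorem cqState_apply [Zero R] (M : ι → Matrix n n R) (a b : ι × n) :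
    cqState M a b = if a.1 = b.1 then M a.1 a.2 b.2 else 0 := by
  simp [cqState, blockDiagonal_apply]

theorem cqState_smul {S : Type*} [Zero R] [SMulZeroClass S R] (c : S) (M : ι → Matrix n n R) :
    cqState (c • M) = c • cqState M := by
  rw [cqState, blockDiagonal_smul, submatrix_smul]
  rfl

variable [Fintype ι] [Fintype n]

theorem cqState_mul [NonUnitalNonAssocSemiring R] (M N : ι → Matrix n n R) :
    cqState M * cqState N = cqState (M * N) := by
  change (blockDiagonal M).submatrix Prod.swap (Equiv.prodComm ι n) *
    (blockDiagonal N).submatrix (Equiv.prodComm ι n) Prod.swap = _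
  rw [submatrix_mul_equiv, ← blockDiagonal_mul]
  rfl

theorem trace_cqState [AddCommMonoid R] (M : ι → Matrix n n R) :
    (cqState M).trace = ∑ x, (M x).trace := by
  simp [trace, cqState_apply, Fintype.sum_prod_type]

end CQState

theorem vecMulVec_mul_self_of_dotProduct_eq_one {n R : Type*} [Fintype n] [CommSemiring R]
    {v w : n → R} (h : v ⬝ᵥ w = 1) : vecMulVec w v * vecMulVec w v = vecMulVec w v := by
  rw [vecMulVec_mul_vecMulVec, h, one_smul]

namespace IsHermitian

variable {𝕜 n : Type*} [RCLike 𝕜] [Fintype n] [DecidableEq n] {A : Matrix n n 𝕜}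

theorem sum_eigenvalues_eq_re_trace (hA : A.IsHermitian) :
    ∑ i, hA.eigenvalues i = RCLike.re A.trace := by
  simp [hA.trace_eq_sum_eigenvalues]

theorem eigenvalues_eq_zero_or_eq_of_mul_self_eq_smul (hA : A.IsHermitian) {c : ℝ}
    (hc : A * A = c • A) (i : n) : hA.eigenvalues i = 0 ∨ hA.eigenvalues i = c := by
  set μ := hA.eigenvalues i
  set v := ⇑(hA.eigenvectorBasis i)
  have hv : v ≠ 0 := fun h =>
    hA.eigenvectorBasis.orthonormal.ne_zero i (by ext j; exact congrFun h j)
  have hAv : A *ᵥ v = μ • v := hA.mulVec_eigenvectorBasis i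
  have hμ : (μ * μ) • v = (c * μ) • v := by
    rw [mul_smul, mul_smul, ← hAv, ← mulVec_smul, ← hAv, mulVec_mulVec, hc, smul_mulVec]
  have : μ * (μ - c) = 0 := by linear_combination smul_left_injective ℝ hv hμ
  rcases mul_eq_zero.mp this with h | h
  · exact Or.inl h
  · exact Or.inr (sub_eq_zero.mp h)

theorem sum_comp_eigenvalues_of_eq_diagonal (hA : A.IsHermitian) {d : n → ℝ}
    (hd : A = diagonal fun i => (d i : 𝕜)) (f : ℝ → ℝ) :
    ∑ i, f (hA.eigenvalues i) = ∑ i, f (d i) := by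
  have hroots : A.charpoly.roots = Multiset.map (RCLike.ofReal ∘ d) Finset.univ.val := by
    rw [hd, charpoly_diagonal, Polynomial.roots_prod _ _ (by
      simp [Finset.prod_ne_zero_iff, Polynomial.X_sub_C_ne_zero])]
    simp
  rw [hA.roots_charpoly_eq_eigenvalues, ← Multiset.map_map, ← Multiset.map_map] at hroots
  have := congrArg (fun s => (s.map f).sum) (Multiset.map_injective RCLike.ofReal_injective hroots)
  simpa only [Multiset.map_map, Function.comp_def, ← Finset.sum_eq_multiset_sum] using this

end IsHermitian

end Matrix

section VonNeumannEntropy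

variable {n : Type*} [Fintype n] [DecidableEq n] {ρ : Matrix n n ℂ}

theorem vnEntropy_eq_of_mul_self_eq_smul (hρ : ρ.IsHermitian) {c : ℝ} (hc : ρ * ρ = c • ρ) :
    vnEntropy hρ = -logb 2 c * ρ.trace.re := by
  rw [vnEntropy, ← RCLike.re_to_complex, ← hρ.sum_eigenvalues_eq_re_trace, Finset.mul_sum]
  refine Finset.sum_congr rfl fun i _ => ?_
  rcases hρ.eigenvalues_eq_zero_or_eq_of_mul_self_eq_smul hc i with h | h <;> rw [h]
  · simp
  · ring

theorem vnEntropy_of_eq_diagonal (hρ : ρ.IsHermitian) {d : n → ℝ}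
    (hd : ρ = diagonal fun i => (d i : ℂ)) :
    vnEntropy hρ = ∑ i, -(d i * logb 2 (d i)) :=
  hρ.sum_comp_eigenvalues_of_eq_diagonal hd fun x => -(x * logb 2 x)

end VonNeumannEntropy

/-- `H(Z | Y)` for a uniform bit `Z` sent through the binary channel `φ z y = P(Y = y | Z = z)`;
`PY` is the output law and `post z y = P(Z = z | Y = y)`. -/
noncomputable def condEntropyUniform (φ : Bool → Bool → ℝ) : ℝ :=
  let PY : Bool → ℝ := fun y => (1/2) * φ false y + (1/2) * φ true y
  let post : Bool → Bool → ℝ := fun z y => (1/2) * φ z y / PY y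
  ∑ y : Bool, PY y * ∑ z : Bool, -(post z y * logb 2 (post z y))

theorem neg_mul_logb_add_neg_mul_logb_one_sub (p : ℝ) :
    -(p * logb 2 p) + -((1 - p) * logb 2 (1 - p)) = binEntropy p / log 2 := by
  simp only [binEntropy_eq_negMulLog_add_negMulLog_one_sub, negMulLog, logb]
  ring

theorem condEntropyUniform_bsc (p : ℝ) :
    condEntropyUniform (fun z y => if y = z then 1 - p else p) = binEntropy p / log 2 := by
  rw [← neg_mul_logb_add_neg_mul_logb_one_sub]
  have h₁ : (1/2 : ℝ) * p + 1/2 * (1 - p) = 1/2 := by ring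
  have h₂ : (1/2 : ℝ) * (1 - p) + 1/2 * p = 1/2 := by ring
  simp only [condEntropyUniform, Fintype.sum_bool, Bool.false_eq_true, Bool.true_eq_false,
    ↓reduceIte, h₁, h₂]
  ring_nf

theorem ofReal_sqrt_mul_self {a : ℝ} (ha : 0 ≤ a) : (√a : ℂ) * √a = a := by
  rw [← Complex.ofReal_mul, mul_self_sqrt ha]

noncomputable def dualState (p : ℝ) (x : Bool) : Fin 2 → ℂ :=
  ![(√p : ℂ), (if x then -1 else 1) * (√(1 - p) : ℂ)]

theorem dotProduct_star_dualState {p : ℝ} (hp0 : 0 ≤ p) (hp1 : p ≤ 1) (x : Bool) :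
    star (dualState p x) ⬝ᵥ dualState p x = 1 := by
  have hp := ofReal_sqrt_mul_self hp0
  have hq := ofReal_sqrt_mul_self (sub_nonneg.mpr hp1)
  push_cast at hq
  cases x <;> simp [dotProduct, Fin.sum_univ_two, dualState, Complex.conj_ofReal] <;>
    linear_combination hp + hq

theorem dualState_average_eq_diagonal {p : ℝ} (hp0 : 0 ≤ p) (hp1 : p ≤ 1) :
    (1/2 : ℂ) • vecMulVec (dualState p false) (star (dualState p false)) +
      (1/2 : ℂ) • vecMulVec (dualState p true) (star (dualState p true)) =
    diagonal fun i => ((![p, 1 - p] i : ℝ) : ℂ) := by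
  have hp := ofReal_sqrt_mul_self hp0
  have hq := ofReal_sqrt_mul_self (sub_nonneg.mpr hp1)
  push_cast at hq
  ext i j
  simp only [Matrix.add_apply, Matrix.smul_apply, vecMulVec_apply, diagonal_apply, smul_eq_mul]
  fin_cases i <;> fin_cases j <;> simp [dualState]
  · linear_combination hp
  · linear_combination hq

/-- Capacity duality for the BSC and its dual: with uniform inputs,
`H(Z|W(Z)) + H(X|W^⊥(X)) = 1`, i.e. `I(W) + I(W^⊥) = 1`.  The first term is
the Shannon conditional entropy of the `BSC(p)` input given its output; the
second is the von Neumann conditional entropy `S(ρ_{XB}) − S(ρ_B)` for the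
dual channel with pure outputs `√p|0⟩ + (−1)^x √(1−p)|1⟩`. -/
theorem stmt_14 (p : ℝ) (hp0 : 0 ≤ p) (hp1 : p ≤ 1)
    (ψ : Bool → Fin 2 → ℂ)
    (hψ : ψ = fun x =>
      ![(Real.sqrt p : ℂ), (if x then -1 else 1) * (Real.sqrt (1 - p) : ℂ)])
    (σ : Bool → Matrix (Fin 2) (Fin 2) ℂ)
    (hσ : ∀ x, σ x = fun i j => ψ x i * star (ψ x j))
    (ρXB : Matrix (Bool × Fin 2) (Bool × Fin 2) ℂ)
    (hρXB : ρXB = fun a b => if a.1 = b.1 then (1/2 : ℂ) * σ a.1 a.2 b.2 else 0)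
    (ρB : Matrix (Fin 2) (Fin 2) ℂ)
    (hρB : ρB = (1/2 : ℂ) • σ false + (1/2 : ℂ) • σ true)
    (hXB : ρXB.IsHermitian) (hB : ρB.IsHermitian) :
    let φ : Bool → Bool → ℝ := fun z y => if y = z then 1 - p else p
    let PY : Bool → ℝ := fun y => (1/2) * φ false y + (1/2) * φ true y
    let post : Bool → Bool → ℝ := fun z y => (1/2) * φ z y / PY y
    (∑ y : Bool, PY y * ∑ z : Bool, -(post z y * Real.logb 2 (post z y))) +
      (vnEntropy hXB - vnEntropy hB) = 1 := by
  have hσ_eq : ∀ x, σ x = vecMulVec (dualState p x) (star (dualState p x)) := fun x => by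
    rw [hσ, hψ]
    rfl
  have hσ_proj : σ * σ = σ := funext fun x => by
    rw [Pi.mul_apply, hσ_eq, vecMulVec_mul_self_of_dotProduct_eq_one
      (dotProduct_star_dualState hp0 hp1 x)]
  have hσ_trace : ∀ x, (σ x).trace = 1 := fun x => by
    rw [hσ_eq, trace_vecMulVec, dotProduct_comm, dotProduct_star_dualState hp0 hp1]
  have hXB_eq : ρXB = (1/2 : ℝ) • cqState σ := by
    rw [← cqState_smul]
    ext a b
    simp [hρXB, cqState_apply]
  have hXB_sq : ρXB * ρXB = (1/2 : ℝ) • ρXB := by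
    rw [hXB_eq, smul_mul_smul_comm, cqState_mul, hσ_proj, smul_smul]
  have hXB_trace : ρXB.trace = 1 := by
    rw [hXB_eq, trace_smul, trace_cqState, Fintype.sum_bool, hσ_trace, hσ_trace]
    norm_num
  have hB_diag : ρB = diagonal fun i => ((![p, 1 - p] i : ℝ) : ℂ) := by
    rw [hρB, hσ_eq, hσ_eq, dualState_average_eq_diagonal hp0 hp1]
  have hS_XB : vnEntropy hXB = 1 := by
    rw [vnEntropy_eq_of_mul_self_eq_smul hXB hXB_sq, hXB_trace, one_div, logb_inv,
      logb_self_eq_one one_lt_two]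
    simp
  have hS_B : vnEntropy hB = binEntropy p / log 2 := by
    rw [vnEntropy_of_eq_diagonal hB hB_diag, Fin.sum_univ_two]
    exact neg_mul_logb_add_neg_mul_logb_one_sub p
  show condEntropyUniform (fun z y => if y = z then 1 - p else p) +
    (vnEntropy hXB - vnEntropy hB) = 1
  rw [condEntropyUniform_bsc, hS_XB, hS_B]
  ring
end

section
/- Let ψ_{XYB} = (1/|X|) ∑_{x,z} P(z) |x⟩⟨x|_X ⊗ |x+z⟩⟨x+z|_Y ⊗ σ_z (addition in ZMod d, σ_z density matrices on H_B, P a probability distribution), and let ρ_{YB} = ∑_y P(y) |y⟩⟨y|_Y ⊗ σ_y. Then the von Neumann conditional entropies satisfy H(X|YB)_ψ = H(Y|B)_ρ. -/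
/-!
Both ψ_{XYB} and ψ_{YB} are block diagonal in their classical registers: ψ_{XYB} has the block
d⁻¹ P(y - x) σ_{y - x} at (x, y), and ψ_{YB} has d copies of the block d⁻¹ ρ_B. The spectrum of
a block-diagonal matrix is the union of the spectra of its blocks, so after the shift
z = y - x the spectrum of ψ_{XYB} is d copies of the spectrum of d⁻¹ ρ_{YB}. Since
η(t/d) = η(t)/d + (t/d) log d for η(t) = -t log t, and ρ_{YB}, ρ_B have unit trace, this gives
S(ψ_{XYB}) = S(ρ_{YB}) + log d and S(ψ_{YB}) = S(ρ_B) + log d.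
-/

open scoped ComplexOrder
open Polynomial Matrix

noncomputable def negMulLogb (t : ℝ) : ℝ := -(t * Real.logb 2 t)

-- No sign conditions are needed: `Real.logb` is built on `log |·|` and vanishes at `0`.
lemma negMulLogb_inv_mul (c t : ℝ) :
    negMulLogb (c⁻¹ * t) = c⁻¹ * negMulLogb t + c⁻¹ * t * Real.logb 2 c := by
  rcases eq_or_ne c 0 with rfl | hc
  · simp [negMulLogb]
  rcases eq_or_ne t 0 with rfl | ht
  · simp [negMulLogb]
  rw [negMulLogb, negMulLogb, Real.logb_mul (inv_ne_zero hc) ht, Real.logb_inv]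
  ring

lemma sum_negMulLogb_inv_mul {ι : Type*} (s : Finset ι) (c : ℝ) (v : ι → ℝ) :
    ∑ i ∈ s, negMulLogb (c⁻¹ * v i) =
      c⁻¹ * ∑ i ∈ s, negMulLogb (v i) + c⁻¹ * Real.logb 2 c * ∑ i ∈ s, v i := by
  rw [Finset.mul_sum, Finset.mul_sum, ← Finset.sum_add_distrib]
  exact Finset.sum_congr rfl fun i _ => by rw [negMulLogb_inv_mul]; ring

lemma Fintype.sum_prod_sub_eq_card_smul {G M : Type*} [AddGroup G] [Fintype G]
    [AddCommMonoid M] (f : G → M) : ∑ p : G × G, f (p.2 - p.1) = Fintype.card G • ∑ z, f z := by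
  rw [Fintype.sum_prod_type, ← Finset.card_univ, ← Finset.sum_const]
  exact Finset.sum_congr rfl fun x _ => (Equiv.subRight x).sum_comp f

theorem Matrix.charpoly_blockDiagonal {R n o : Type*} [CommRing R] [Fintype n] [DecidableEq n]
    [Fintype o] [DecidableEq o] (M : o → Matrix n n R) :
    (blockDiagonal M).charpoly = ∏ k, (M k).charpoly := by
  have hcharmatrix : charmatrix (blockDiagonal M) = blockDiagonal fun k => charmatrix (M k) := by
    ext ⟨i, k⟩ ⟨j, k'⟩
    simp only [charmatrix_apply, blockDiagonal_apply, diagonal_apply, Prod.mk.injEq]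
    split_ifs <;> simp_all
  rw [charpoly, hcharmatrix, det_blockDiagonal]
  rfl

section Hermitian

variable {n : Type*} [Fintype n] [DecidableEq n]

lemma Matrix.IsHermitian.sum_eigenvalues_eq_re_trace_s17 {A : Matrix n n ℂ} (hA : A.IsHermitian) :
    ∑ i, hA.eigenvalues i = A.trace.re := by
  simp [hA.trace_eq_sum_eigenvalues]

lemma Matrix.IsHermitian.map_eigenvalues_eq_of_charpoly_eq {ι : Type*} [Fintype ι]
    {A : Matrix n n ℂ} (hA : A.IsHermitian) (v : ι → ℝ)
    (h : A.charpoly = ∏ i, (X - C (v i : ℂ))) :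
    Finset.univ.val.map hA.eigenvalues = Finset.univ.val.map v := by
  refine Multiset.map_injective Complex.ofReal_injective ?_
  have hprod : ∏ i, (X - C (v i : ℂ)) =
      ((Finset.univ.val.map fun i => (v i : ℂ)).map fun a => X - C a).prod := by
    rw [Multiset.map_map]; rfl
  have := hA.roots_charpoly_eq_eigenvalues
  rw [h, hprod, roots_multiset_prod_X_sub_C] at this
  rw [Multiset.map_map, Multiset.map_map]
  exact this.symm

lemma vnEntropy_eq_of_charpoly_eq {ι : Type*} [Fintype ι]
    {A : Matrix n n ℂ} (hA : A.IsHermitian) (v : ι → ℝ)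
    (h : A.charpoly = ∏ i, (X - C (v i : ℂ))) :
    vnEntropy hA = ∑ i, negMulLogb (v i) := by
  have := congrArg (fun s => (s.map negMulLogb).sum) (hA.map_eigenvalues_eq_of_charpoly_eq v h)
  simp only [Multiset.map_map] at this
  exact this

lemma vnEntropy_eq_sum_of_blocks {k : Type*} [Fintype k] [DecidableEq k]
    {A : Matrix (k × n) (k × n) ℂ} (hA : A.IsHermitian) (c : k → ℝ)
    {M : k → Matrix n n ℂ} (hM : ∀ j, (M j).IsHermitian)
    (h : A = fun a b => if a.1 = b.1 then (c a.1 : ℂ) * M a.1 a.2 b.2 else 0) :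
    vnEntropy hA = ∑ j, ∑ i, negMulLogb (c j * (hM j).eigenvalues i) := by
  have hA_block : A = reindex (Equiv.prodComm n k) (Equiv.prodComm n k)
      (blockDiagonal fun j => c j • M j) := by
    ext ⟨j, i⟩ ⟨j', i'⟩
    simp [h, blockDiagonal_apply, Complex.real_smul]
  have hcharpoly : A.charpoly =
      ∏ p : k × n, (X - C ((c p.1 * (hM p.1).eigenvalues p.2 : ℝ) : ℂ)) := by
    rw [hA_block, charpoly_reindex, charpoly_blockDiagonal, Fintype.prod_prod_type]
    refine Finset.prod_congr rfl fun j _ => ?_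
    rw [← cfc_const_mul_id (c j) (M j) (hM j).isSelfAdjoint, (hM j).charpoly_cfc_eq]
    rfl
  rw [vnEntropy_eq_of_charpoly_eq hA _ hcharpoly, Fintype.sum_prod_type]

end Hermitian

theorem stmt_17_general (d : ℕ) [NeZero d] (B : Type) [Fintype B] [DecidableEq B]
    (P : ZMod d → ℝ) (hPsum : ∑ z : ZMod d, P z = 1)
    (σ : ZMod d → Matrix B B ℂ)
    (hσ : ∀ z, (σ z).PosSemidef) (hσtr : ∀ z, (σ z).trace = 1)
    (ψXYB : Matrix ((ZMod d × ZMod d) × B) ((ZMod d × ZMod d) × B) ℂ)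
    (hψXYB : ψXYB = fun a b =>
      if a.1 = b.1 then
        ((d : ℂ)⁻¹) * (P (a.1.2 - a.1.1) : ℂ) * σ (a.1.2 - a.1.1) a.2 b.2
      else 0)
    (ψYB : Matrix (ZMod d × B) (ZMod d × B) ℂ)
    (hψYB : ψYB = fun a b =>
      if a.1 = b.1 then
        ((d : ℂ)⁻¹) * ∑ z : ZMod d, (P z : ℂ) * σ z a.2 b.2
      else 0)
    (ρYB : Matrix (ZMod d × B) (ZMod d × B) ℂ)
    (hρYB : ρYB = fun a b =>
      if a.1 = b.1 then (P a.1 : ℂ) * σ a.1 a.2 b.2 else 0)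
    (ρB : Matrix B B ℂ)
    (hρB : ρB = ∑ z : ZMod d, (P z : ℂ) • σ z)
    (hXYB : ψXYB.IsHermitian) (hYB : ψYB.IsHermitian)
    (hYBρ : ρYB.IsHermitian) (hBρ : ρB.IsHermitian) :
    vnEntropy hXYB - vnEntropy hYB = vnEntropy hYBρ - vnEntropy hBρ := by
  have hd : (d : ℝ) ≠ 0 := Nat.cast_ne_zero.mpr (NeZero.ne d)
  have hσ_sum : ∀ z, ∑ i, (hσ z).1.eigenvalues i = 1 := fun z => by
    simp [(hσ z).1.sum_eigenvalues_eq_re_trace_s17, hσtr]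
  have hρB_sum : ∑ i, hBρ.eigenvalues i = 1 := by
    rw [hBρ.sum_eigenvalues_eq_re_trace_s17, hρB, trace_sum]
    simp [trace_smul, hσtr, ← Complex.ofReal_sum, hPsum]
  have hS_ψXYB : vnEntropy hXYB = vnEntropy hYBρ + Real.logb 2 d := by
    rw [vnEntropy_eq_sum_of_blocks hXYB (fun p => (d : ℝ)⁻¹ * P (p.2 - p.1))
        (fun p => (hσ (p.2 - p.1)).1) (by rw [hψXYB]; push_cast; rfl),
      Fintype.sum_prod_sub_eq_card_smul
        (fun z => ∑ i, negMulLogb ((d : ℝ)⁻¹ * P z * (hσ z).1.eigenvalues i)),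
      vnEntropy_eq_sum_of_blocks hYBρ P (fun z => (hσ z).1) hρYB]
    simp only [mul_assoc, sum_negMulLogb_inv_mul, ← Finset.mul_sum, hσ_sum, mul_one,
      Finset.sum_add_distrib, hPsum, ZMod.card, nsmul_eq_mul]
    field_simp
  have hS_ψYB : vnEntropy hYB = vnEntropy hBρ + Real.logb 2 d := by
    rw [vnEntropy_eq_sum_of_blocks hYB (fun _ => (d : ℝ)⁻¹) (fun _ => hBρ)
      (by
        ext a b
        simp only [hψYB, hρB, Matrix.sum_apply, Matrix.smul_apply, smul_eq_mul, Finset.mul_sum,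
          Complex.ofReal_inv, Complex.ofReal_natCast])]
    simp only [sum_negMulLogb_inv_mul, hρB_sum, Finset.sum_const, Finset.card_univ, ZMod.card,
      nsmul_eq_mul]
    change _ = ∑ i, negMulLogb (hBρ.eigenvalues i) + _
    field_simp
  rw [hS_ψXYB, hS_ψYB]
  ring

/-- For `ψ_{XYB} = (1/d) ∑_{x,z} P(z)|x⟩⟨x|⊗|x+z⟩⟨x+z|⊗σ_z` and
`ρ_{YB} = ∑_y P(y)|y⟩⟨y|⊗σ_y`, the von Neumann conditional entropies satisfy
`H(X|YB)_ψ = H(Y|B)_ρ`. -/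
theorem stmt_17 (d : ℕ) [NeZero d] (B : Type) [Fintype B] [DecidableEq B]
    (P : ZMod d → ℝ) (hP : ∀ z, 0 ≤ P z) (hPsum : ∑ z : ZMod d, P z = 1)
    (σ : ZMod d → Matrix B B ℂ)
    (hσ : ∀ z, (σ z).PosSemidef) (hσtr : ∀ z, (σ z).trace = 1)
    (ψXYB : Matrix ((ZMod d × ZMod d) × B) ((ZMod d × ZMod d) × B) ℂ)
    (hψXYB : ψXYB = fun a b =>
      if a.1 = b.1 then
        ((d : ℂ)⁻¹) * (P (a.1.2 - a.1.1) : ℂ) * σ (a.1.2 - a.1.1) a.2 b.2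
      else 0)
    (ψYB : Matrix (ZMod d × B) (ZMod d × B) ℂ)
    (hψYB : ψYB = fun a b =>
      if a.1 = b.1 then
        ((d : ℂ)⁻¹) * ∑ z : ZMod d, (P z : ℂ) * σ z a.2 b.2
      else 0)
    (ρYB : Matrix (ZMod d × B) (ZMod d × B) ℂ)
    (hρYB : ρYB = fun a b =>
      if a.1 = b.1 then (P a.1 : ℂ) * σ a.1 a.2 b.2 else 0)
    (ρB : Matrix B B ℂ)
    (hρB : ρB = ∑ z : ZMod d, (P z : ℂ) • σ z)
    (hXYB : ψXYB.IsHermitian) (hYB : ψYB.IsHermitian)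
    (hYBρ : ρYB.IsHermitian) (hBρ : ρB.IsHermitian) :
    vnEntropy hXYB - vnEntropy hYB = vnEntropy hYBρ - vnEntropy hBρ :=
  stmt_17_general d B P hPsum σ hσ hσtr ψXYB hψXYB ψYB hψYB ρYB hρYB ρB hρB hXYB hYB hYBρ hBρ
end

section
/- Let W be a binary-input channel with output density matrices φ_0, φ_1 and define the trace distance δ(W) = ½‖φ_0 − φ_1‖₁ and the fidelity F(W) = F(φ_0, φ_1) = ‖√φ_0 √φ_1‖₁. For the dual channel whose outputs are purifications: if |θ_0⟩, |θ_1⟩ are purifications of the dual channel outputs constructed as |θ_x⟩ = (1/√2) ∑_{z∈{0,1}} (−1)^{xz} |z⟩_C ⊗ |φ_z⟩_{BD} (with |φ_z⟩ purifications of φ_z), then the fidelity of the dual outputs (tracing out B) satisfies F(Tr_B θ_0, Tr_B θ_1) = max_U ½|Tr[U(φ_0 − φ_1)]| = δ(W), where the max is over unitaries on B. -/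
open scoped ComplexOrder Classical

/-- The positive semidefinite square root of a positive semidefinite matrix, as
`Matrix.PosSemidef.sqrt` was defined in the older Mathlib. -/
noncomputable def Matrix.PosSemidef.oldSqrt {n : Type*} [Fintype n] [DecidableEq n]
    {A : Matrix n n ℂ} (hA : A.PosSemidef) : Matrix n n ℂ :=
  (hA.1.eigenvectorUnitary : Matrix n n ℂ) *
    Matrix.diagonal ((↑) ∘ (Real.sqrt ·) ∘ hA.1.eigenvalues) *
    (star hA.1.eigenvectorUnitary : Matrix n n ℂ)

/-- Square root of a positive semidefinite matrix (junk value `0` otherwise). -/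
noncomputable def psdSqrt {m : Type*} [Fintype m] [DecidableEq m]
    (A : Matrix m m ℂ) : Matrix m m ℂ :=
  if h : A.PosSemidef then Matrix.PosSemidef.oldSqrt h else 0

/-- Trace norm `‖A‖₁ = Tr √(AᴴA)`. -/
noncomputable def traceNorm {m : Type*} [Fintype m] [DecidableEq m]
    (A : Matrix m m ℂ) : ℝ :=
  ((Matrix.PosSemidef.oldSqrt (Matrix.posSemidef_conjTranspose_mul_self A)).trace).re

/-- Fidelity `F(ρ,σ) = ‖√ρ√σ‖₁` of two (positive semidefinite) matrices. -/
noncomputable def fid {m : Type*} [Fintype m] [DecidableEq m]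
    (ρ σ : Matrix m m ℂ) : ℝ :=
  traceNorm (psdSqrt ρ * psdSqrt σ)

/-! Write `τ_x = A_x A_xᴴ`, where `A_x` is `θ_x` read as a matrix with rows indexed by `CD` and
columns by `B`. Uhlmann's identity `F(AAᴴ, BBᴴ) = ‖AᴴB‖₁` reduces the fidelity to the trace norm
of the overlap `A_0ᴴ A_1 = ½ (φ_0 − φ_1)ᵀ`; it rests on `Tr √(XᴴX) = Tr √(XXᴴ)` for rectangular
`X`, true because `XᴴX` and `XXᴴ` have the same nonzero eigenvalues (`charpoly_mul_comm'`).
For Hermitian `M`, the variational formula `‖M‖₁ = max_U |Tr (U M)|` is attained at the unitary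
`sign M`, and bounded above because in an eigenbasis of `M` the diagonal entries of a unitary have
modulus at most one. -/

open Matrix
open scoped MatrixOrder

section RCLike

variable {𝕜 m n : Type*} [RCLike 𝕜] [Fintype m] [DecidableEq m] [Fintype n] [DecidableEq n]

lemma Matrix.IsHermitian.trace_cfc {A : Matrix n n 𝕜} (hA : A.IsHermitian) (f : ℝ → ℝ) :
    (cfc f A).trace = ∑ i, (f (hA.eigenvalues i) : 𝕜) := by
  rw [hA.cfc_eq, IsHermitian.cfc, Unitary.conjStarAlgAut_apply, trace_mul_cycle,
    UnitaryGroup.star_mul_self, one_mul, trace_diagonal]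
  rfl

lemma Matrix.IsHermitian.trace_cfc_eq_sum_roots {A : Matrix n n 𝕜} (hA : A.IsHermitian)
    (f : ℝ → ℝ) :
    (cfc f A).trace = (A.charpoly.roots.map fun z => (f (RCLike.re z) : 𝕜)).sum := by
  rw [hA.trace_cfc, hA.roots_charpoly_eq_eigenvalues, Multiset.map_map]
  simp only [Finset.sum, Function.comp_def, RCLike.ofReal_re]

lemma Matrix.IsHermitian.trace_cfc_transpose {A : Matrix n n 𝕜} (hA : A.IsHermitian)
    (f : ℝ → ℝ) : (cfc f Aᵀ).trace = (cfc f A).trace := by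
  rw [hA.transpose.trace_cfc_eq_sum_roots, hA.trace_cfc_eq_sum_roots, charpoly_transpose]

lemma Matrix.trace_cfc_conjTranspose_mul_self (X : Matrix m n 𝕜) {f : ℝ → ℝ} (hf : f 0 = 0) :
    (cfc f (Xᴴ * X)).trace = (cfc f (X * Xᴴ)).trace := by
  have h := congrArg Polynomial.roots (charpoly_mul_comm' Xᴴ X)
  rw [Polynomial.roots_mul ((Polynomial.monic_X_pow _).mul (charpoly_monic (Xᴴ * X))).ne_zero,
    Polynomial.roots_mul ((Polynomial.monic_X_pow _).mul (charpoly_monic (X * Xᴴ))).ne_zero,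
    Polynomial.roots_X_pow, Polynomial.roots_X_pow] at h
  rw [(isHermitian_conjTranspose_mul_self X).trace_cfc_eq_sum_roots,
    (isHermitian_mul_conjTranspose_self X).trace_cfc_eq_sum_roots]
  simpa [Multiset.map_nsmul, Multiset.sum_nsmul, hf] using
    congrArg (fun s => (s.map fun z => (f (RCLike.re z) : 𝕜)).sum) h

lemma Matrix.PosSemidef.sqrt_eq_cfc_real_sqrt {A : Matrix n n 𝕜} (hA : A.PosSemidef) :
    CFC.sqrt A = cfc Real.sqrt A := by
  rw [CFC.sqrt_eq_real_sqrt A hA.nonneg, cfcₙ_eq_cfc]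

lemma Matrix.trace_sqrt_conjTranspose_mul_self (X : Matrix m n 𝕜) :
    (CFC.sqrt (Xᴴ * X)).trace = (CFC.sqrt (X * Xᴴ)).trace := by
  rw [(posSemidef_conjTranspose_mul_self X).sqrt_eq_cfc_real_sqrt,
    (posSemidef_self_mul_conjTranspose X).sqrt_eq_cfc_real_sqrt,
    trace_cfc_conjTranspose_mul_self X Real.sqrt_zero]

end RCLike

section TraceNorm

variable {m n : Type*} [Fintype m] [DecidableEq m] [Fintype n] [DecidableEq n]

lemma Matrix.PosSemidef.oldSqrt_eq_sqrt {A : Matrix n n ℂ} (hA : A.PosSemidef) :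
    hA.oldSqrt = CFC.sqrt A := by
  rw [hA.sqrt_eq_cfc_real_sqrt, hA.1.cfc_eq, IsHermitian.cfc, Unitary.conjStarAlgAut_apply]
  rfl

lemma psdSqrt_eq_sqrt {A : Matrix n n ℂ} (hA : A.PosSemidef) : psdSqrt A = CFC.sqrt A := by
  rw [psdSqrt, dif_pos hA, hA.oldSqrt_eq_sqrt]

lemma traceNorm_eq_re_trace_sqrt (A : Matrix n n ℂ) :
    traceNorm A = (CFC.sqrt (Aᴴ * A)).trace.re := by
  rw [traceNorm, PosSemidef.oldSqrt_eq_sqrt]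

lemma traceNorm_eq_re_trace_sqrt_mul_conjTranspose (A : Matrix n n ℂ) :
    traceNorm A = (CFC.sqrt (A * Aᴴ)).trace.re := by
  rw [traceNorm_eq_re_trace_sqrt, trace_sqrt_conjTranspose_mul_self]

lemma traceNorm_eq_re_trace_abs (A : Matrix n n ℂ) : traceNorm A = (CFC.abs A).trace.re :=
  traceNorm_eq_re_trace_sqrt A

lemma traceNorm_smul (c : ℂ) (A : Matrix n n ℂ) : traceNorm (c • A) = ‖c‖ * traceNorm A := by
  rw [traceNorm_eq_re_trace_abs, traceNorm_eq_re_trace_abs, CFC.abs_smul, trace_smul]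
  simp

lemma traceNorm_transpose (A : Matrix n n ℂ) : traceNorm Aᵀ = traceNorm A := by
  have h : Aᵀᴴ * Aᵀ = (A * Aᴴ)ᵀ := by
    rw [transpose_mul]
    rfl
  have hAA := posSemidef_self_mul_conjTranspose A
  rw [traceNorm_eq_re_trace_sqrt, traceNorm_eq_re_trace_sqrt_mul_conjTranspose, h,
    hAA.transpose.sqrt_eq_cfc_real_sqrt, hAA.sqrt_eq_cfc_real_sqrt, hAA.1.trace_cfc_transpose]

lemma fid_mul_conjTranspose {k : Type*} [Fintype k] [DecidableEq k] (A B : Matrix m k ℂ) :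
    fid (A * Aᴴ) (B * Bᴴ) = traceNorm (Aᴴ * B) := by
  set R := CFC.sqrt (A * Aᴴ)
  set S := CFC.sqrt (B * Bᴴ)
  have hR : Rᴴ = R := (CFC.sqrt_nonneg _).isSelfAdjoint
  have hS : Sᴴ = S := (CFC.sqrt_nonneg _).isSelfAdjoint
  have hRR : R * R = A * Aᴴ := CFC.sqrt_mul_sqrt_self _ (posSemidef_self_mul_conjTranspose A).nonneg
  have hSS : S * S = B * Bᴴ := CFC.sqrt_mul_sqrt_self _ (posSemidef_self_mul_conjTranspose B).nonneg
  have h₁ : R * S * (R * S)ᴴ = (R * B) * (R * B)ᴴ := by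
    simp only [conjTranspose_mul, hR, hS, Matrix.mul_assoc]
    rw [← Matrix.mul_assoc S, hSS, Matrix.mul_assoc]
  have h₂ : (R * B)ᴴ * (R * B) = (Aᴴ * B)ᴴ * (Aᴴ * B) := by
    simp only [conjTranspose_mul, conjTranspose_conjTranspose, hR, Matrix.mul_assoc]
    rw [← Matrix.mul_assoc R, hRR, Matrix.mul_assoc]
  rw [fid, psdSqrt_eq_sqrt (posSemidef_self_mul_conjTranspose A),
    psdSqrt_eq_sqrt (posSemidef_self_mul_conjTranspose B),
    traceNorm_eq_re_trace_sqrt_mul_conjTranspose, h₁, ← trace_sqrt_conjTranspose_mul_self, h₂,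
    traceNorm_eq_re_trace_sqrt]

lemma Matrix.IsHermitian.traceNorm_eq_sum_abs_eigenvalues {M : Matrix n n ℂ}
    (hM : M.IsHermitian) : traceNorm M = ∑ i, |hM.eigenvalues i| := by
  rw [traceNorm_eq_re_trace_abs, CFC.abs_eq_cfc_norm M hM.isSelfAdjoint, hM.trace_cfc,
    Complex.re_sum]
  simp

lemma Matrix.IsHermitian.norm_trace_mul_le {M U : Matrix n n ℂ} (hM : M.IsHermitian)
    (hU : U ∈ unitaryGroup n ℂ) : ‖(U * M).trace‖ ≤ traceNorm M := by
  obtain ⟨V, hV, hMV⟩ : ∃ V ∈ unitaryGroup n ℂ,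
      M = V * diagonal (Complex.ofReal ∘ hM.eigenvalues) * star V :=
    ⟨_, hM.eigenvectorUnitary.2, hM.spectral_theorem⟩
  have hW : star V * U * V ∈ unitaryGroup n ℂ :=
    Submonoid.mul_mem _ (Submonoid.mul_mem _ (Unitary.star_mem hV) hU) hV
  have htr : (U * M).trace = ∑ i, (star V * U * V) i i * hM.eigenvalues i := by
    conv_lhs => rw [hMV]
    rw [← Matrix.mul_assoc, ← Matrix.mul_assoc, trace_mul_cycle, ← Matrix.mul_assoc]
    simp [trace, mul_diagonal]
  rw [htr, hM.traceNorm_eq_sum_abs_eigenvalues]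
  refine (norm_sum_le _ _).trans (Finset.sum_le_sum fun i _ => ?_)
  rw [norm_mul, Complex.norm_real, Real.norm_eq_abs]
  exact mul_le_of_le_one_left (abs_nonneg _) (entry_norm_bound_of_unitary hW i i)

lemma Matrix.IsHermitian.exists_norm_trace_mul_eq {M : Matrix n n ℂ} (hM : M.IsHermitian) :
    ∃ U ∈ unitaryGroup n ℂ, ‖(U * M).trace‖ = traceNorm M := by
  -- a sign function with value `1` at `0`, so that `cfc sign M` is unitary
  set sign : ℝ → ℝ := fun t => if 0 ≤ t then 1 else -1
  have hcont : ContinuousOn sign (spectrum ℝ M) := M.finite_real_spectrum.continuousOn sign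
  refine ⟨cfc sign M, (cfc_unitary_iff sign M hM.isSelfAdjoint).2 fun t _ => ?_, ?_⟩
  · by_cases ht : 0 ≤ t <;> simp [sign, ht]
  have h : cfc sign M * M = cfc (fun t : ℝ => |t|) M := by
    nth_rewrite 2 [← cfc_id' ℝ M]
    rw [← cfc_mul sign (fun t => t) M]
    refine cfc_congr fun t _ => ?_
    by_cases ht : 0 ≤ t <;> simp [sign, ht, abs_of_nonneg, abs_of_neg, not_le.mp]
  rw [h, hM.trace_cfc, hM.traceNorm_eq_sum_abs_eigenvalues]
  norm_cast
  exact Real.norm_of_nonneg (Finset.sum_nonneg fun i _ => abs_nonneg _)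

lemma Matrix.IsHermitian.isGreatest_norm_trace_mul {M : Matrix n n ℂ} (hM : M.IsHermitian) :
    IsGreatest {x | ∃ U ∈ unitaryGroup n ℂ, x = ‖(U * M).trace‖} (traceNorm M) :=
  ⟨hM.exists_norm_trace_mul_eq.imp fun _ ⟨hU, h⟩ => ⟨hU, h.symm⟩,
    fun _ ⟨_, hU, hx⟩ => hx ▸ hM.norm_trace_mul_le hU⟩

end TraceNorm

section Purification

variable {B D : Type*}

/-- A vector of `C ⊗ B ⊗ D`, with `C = Bool`, read as a map from `B` to `C ⊗ D`. -/
def purificationMatrix (θ : Bool × B × D → ℂ) : Matrix (Bool × D) B ℂ :=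
  of fun a β => θ (a.1, β, a.2)

lemma purificationMatrix_mul_conjTranspose [Fintype B] (θ : Bool × B × D → ℂ) :
    purificationMatrix θ * (purificationMatrix θ)ᴴ =
      fun a c => ∑ β : B, θ (a.1, β, a.2) * star (θ (c.1, β, c.2)) := by
  ext a c
  simp [purificationMatrix, mul_apply]

lemma conjTranspose_purificationMatrix_mul [Fintype D]
    (φ : Bool → Matrix B B ℂ) (u : Bool → B × D → ℂ)
    (hu : ∀ z i j, φ z i j = ∑ δ : D, u z (i, δ) * star (u z (j, δ)))
    (θ : Bool → Bool × B × D → ℂ)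
    (hθ : ∀ x z β δ, θ x (z, β, δ) =
      (1 / (Real.sqrt 2 : ℂ)) * (if x && z then -1 else 1) * u z (β, δ)) :
    (purificationMatrix (θ false))ᴴ * purificationMatrix (θ true) =
      (1 / 2 : ℂ) • (φ false - φ true)ᵀ := by
  have hc : star (1 / (Real.sqrt 2 : ℂ)) * (1 / (Real.sqrt 2 : ℂ)) = 1 / 2 := by
    rw [star_div₀, star_one, Complex.star_def, Complex.conj_ofReal, div_mul_div_comm, one_mul,
      ← Complex.ofReal_mul, Real.mul_self_sqrt zero_le_two]
    norm_num
  ext β β'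
  simp only [mul_apply, conjTranspose_apply, purificationMatrix, of_apply, Fintype.sum_prod_type,
    Fintype.sum_bool, hθ, hu, Matrix.smul_apply, Matrix.sub_apply, transpose_apply, smul_eq_mul]
  simp only [star_mul', Bool.false_and, Bool.true_and, Bool.false_eq_true, if_true, if_false,
    star_one]
  rw [mul_sub, Finset.mul_sum, Finset.mul_sum, sub_eq_add_neg, add_comm, ← Finset.sum_neg_distrib]
  congr 1 <;> refine Finset.sum_congr rfl fun δ _ => ?_
  · linear_combination (star (u false (β, δ)) * u false (β', δ)) * hc
  · linear_combination (-(star (u true (β, δ)) * u true (β', δ))) * hc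

end Purification

theorem stmt_19_general (b dd : ℕ)
    (φ : Bool → Matrix (Fin b) (Fin b) ℂ)
    (hφ : ∀ z, (φ z).PosSemidef)
    (u : Bool → (Fin b × Fin dd) → ℂ)
    (hu : ∀ z i j, φ z i j = ∑ δ : Fin dd, u z (i, δ) * star (u z (j, δ)))
    (θ : Bool → (Bool × Fin b × Fin dd) → ℂ)
    (hθ : ∀ x z β δ, θ x (z, β, δ) =
      (1 / (Real.sqrt 2 : ℂ)) * (if x && z then -1 else 1) * u z (β, δ))
    (τ : Bool → Matrix (Bool × Fin dd) (Bool × Fin dd) ℂ)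
    (hτ : ∀ x, τ x = fun a c =>
      ∑ β : Fin b, θ x (a.1, β, a.2) * star (θ x (c.1, β, c.2))) :
    fid (τ false) (τ true) = (1/2) * traceNorm (φ false - φ true) ∧
    IsGreatest
      {x : ℝ | ∃ U ∈ Matrix.unitaryGroup (Fin b) ℂ,
        x = (1/2) * ‖
          (((U : Matrix (Fin b) (Fin b) ℂ) * (φ false - φ true)).trace)‖}
      (fid (τ false) (τ true)) := by
  have hτθ : ∀ x, τ x = purificationMatrix (θ x) * (purificationMatrix (θ x))ᴴ := fun x => by
    rw [hτ, purificationMatrix_mul_conjTranspose]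
  have hfid : fid (τ false) (τ true) = (1/2) * traceNorm (φ false - φ true) := by
    rw [hτθ, hτθ, fid_mul_conjTranspose, conjTranspose_purificationMatrix_mul φ u hu θ hθ,
      traceNorm_smul, traceNorm_transpose]
    norm_num
  refine ⟨hfid, hfid ▸ ?_⟩
  have h := (monotone_mul_left_of_nonneg (by norm_num : (0 : ℝ) ≤ 1 / 2)).map_isGreatest
    ((hφ false).1.sub (hφ true).1).isGreatest_norm_trace_mul
  refine (congrArg (IsGreatest · _) ?_).mpr h
  ext x
  simp [eq_comm]

/-- Duality of trace distance and fidelity (Proposition `deltaF`): for the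
dual-channel outputs `Tr_B θ_x` built from purifications
`|θ_x⟩ = (1/√2) ∑_z (−1)^{xz} |z⟩_C |φ_z⟩_{BD}`, one has
`F(Tr_B θ_0, Tr_B θ_1) = max_U ½|Tr[U(φ_0 − φ_1)]| = δ(W)`. -/
theorem stmt_19 (b dd : ℕ)
    (φ : Bool → Matrix (Fin b) (Fin b) ℂ)
    (hφ : ∀ z, (φ z).PosSemidef) (hφtr : ∀ z, (φ z).trace = 1)
    (u : Bool → (Fin b × Fin dd) → ℂ)
    (hu : ∀ z i j, φ z i j = ∑ δ : Fin dd, u z (i, δ) * star (u z (j, δ)))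
    (θ : Bool → (Bool × Fin b × Fin dd) → ℂ)
    (hθ : ∀ x z β δ, θ x (z, β, δ) =
      (1 / (Real.sqrt 2 : ℂ)) * (if x && z then -1 else 1) * u z (β, δ))
    (τ : Bool → Matrix (Bool × Fin dd) (Bool × Fin dd) ℂ)
    (hτ : ∀ x, τ x = fun a c =>
      ∑ β : Fin b, θ x (a.1, β, a.2) * star (θ x (c.1, β, c.2))) :
    fid (τ false) (τ true) = (1/2) * traceNorm (φ false - φ true) ∧
    IsGreatest
      {x : ℝ | ∃ U ∈ Matrix.unitaryGroup (Fin b) ℂ,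
        x = (1/2) * ‖
          (((U : Matrix (Fin b) (Fin b) ℂ) * (φ false - φ true)).trace)‖}
      (fid (τ false) (τ true)) :=
  stmt_19_general b dd φ hφ u hu θ hθ τ hτ
end
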